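/- arXiv:1603.08569 — 2 statements merged into one kernel-verified Lean document; each statement's English description precedes it below -/
import Mathlib

section
/- Let G be a finite group. The collection {[g] : g ∈ G}, where [g] = {h ∈ G : h^G = g^G} and h^G is the normal closure of h, coincides with the collection {N° : N ⊴ G, N° ≠ ∅} where N° = N \ ⋃{H ⊴ G : H ⊊ N}; in particular {[g] : g ∈ G} is a partition of G. -/
open CategoryTheory
open scoped Classical BigOperators

/-- The set of irreducible complex characters of `G`. -/
def Irr (G : Type) [Group G] : Set (G → ℂ) :=
  {f | ∃ V : FDRep ℂ G, Simple V ∧ V.character = f}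

/-- The kernel of a character, `{g : G | χ g = χ 1}`. -/
def charKer {G : Type} [Group G] (f : G → ℂ) : Set G := {g | f g = f 1}

/-- `N° = N \ ⋃ {H ∈ A : H ⊊ N}`. -/
def Ncirc {G : Type} [Group G] (A : Set (Subgroup G)) (N : Subgroup G) : Set G :=
  (N : Set G) \ ⋃ H ∈ {H | H ∈ A ∧ H < N}, (H : Set G)

/-- `X^N`, the irreducible characters whose kernel contains `N`. -/
def XN {G : Type} [Group G] (N : Subgroup G) : Set (G → ℂ) :=
  {ψ ∈ Irr G | (N : Set G) ⊆ charKer ψ}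

/-- `X^{N•} = X^N \ ⋃ {X^K : K ∈ A, N ⊊ K}`. -/
def XNbullet {G : Type} [Group G] (A : Set (Subgroup G)) (N : Subgroup G) : Set (G → ℂ) :=
  XN N \ ⋃ K ∈ {K | K ∈ A ∧ N < K}, XN K

/-- `χ^N = Σ_{ψ ∈ X^N} ψ(1) ψ`. -/
noncomputable def chiN {G : Type} [Group G] (N : Subgroup G) : G → ℂ :=
  fun g => ∑ᶠ ψ ∈ XN N, ψ 1 * ψ g

/-- `χ^{N•} = Σ_{ψ ∈ X^{N•}} ψ(1) ψ`. -/
noncomputable def chiNbullet {G : Type} [Group G] (A : Set (Subgroup G)) (N : Subgroup G) :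
    G → ℂ :=
  fun g => ∑ᶠ ψ ∈ XNbullet A N, ψ 1 * ψ g

/-- `N°` taken with respect to the set of all normal subgroups of `G`. -/
def NcircAll {G : Type} [Group G] (N : Subgroup G) : Set G :=
  (N : Set G) \ ⋃ H ∈ {H : Subgroup G | H.Normal ∧ H < N}, (H : Set G)

/-- `[g] = {h : h^G = g^G}` where `h^G` is the normal closure of `h`. -/
def closureClass {G : Type} [Group G] (g : G) : Set G :=
  {h | Subgroup.normalClosure {h} = Subgroup.normalClosure {g}}

/-- `E_g`, the irreducible characters not containing `g` in their kernel. -/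
def Eg {G : Type} [Group G] (g : G) : Set (G → ℂ) :=
  {χ ∈ Irr G | χ g ≠ χ 1}

/-- `K_g = ⋃ {C_h : E_h = E_g}`. -/
def Kg {G : Type} [Group G] (g : G) : Set G :=
  {x | ∃ h : G, Eg h = Eg g ∧ IsConj h x}

lemma mem_NcircAll_iff {G : Type} [Group G] {N : Subgroup G} {h : G} :
    h ∈ NcircAll N ↔ h ∈ N ∧ ∀ H : Subgroup G, H.Normal → H < N → h ∉ H := by
  simp only [NcircAll, Set.mem_diff, Set.mem_iUnion, Set.mem_setOf_eq, SetLike.mem_coe,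
    not_exists]
  constructor
  · rintro ⟨h1, h2⟩
    exact ⟨h1, fun H hn hlt hm => h2 H ⟨hn, hlt⟩ hm⟩
  · rintro ⟨h1, h2⟩
    exact ⟨h1, fun H hH hm => h2 H hH.1 hH.2 hm⟩

lemma mem_NcircAll_closure {G : Type} [Group G] {g h : G} :
    h ∈ NcircAll (Subgroup.normalClosure {g}) ↔
      Subgroup.normalClosure {h} = Subgroup.normalClosure {g} := by
  rw [mem_NcircAll_iff]
  constructor
  · rintro ⟨h1, h2⟩
    have hle : Subgroup.normalClosure {h} ≤ Subgroup.normalClosure {g} :=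
      Subgroup.normalClosure_le_normal (by simpa using h1)
    rcases lt_or_eq_of_le hle with hlt | heq
    · exact absurd (Subgroup.subset_normalClosure (Set.mem_singleton h))
        (h2 _ Subgroup.normalClosure_normal hlt)
    · exact heq
  · intro heq
    refine ⟨heq ▸ Subgroup.subset_normalClosure (Set.mem_singleton h), ?_⟩
    intro H hn hlt hm
    have : Subgroup.normalClosure {h} ≤ H := Subgroup.normalClosure_le_normal (by simpa using hm)
    exact absurd (lt_of_le_of_lt this hlt) (by rw [heq]; exact lt_irrefl _)

lemma closureClass_eq_NcircAll {G : Type} [Group G] (g : G) :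
    closureClass g = NcircAll (Subgroup.normalClosure {g}) := by
  ext h
  rw [closureClass, Set.mem_setOf_eq, mem_NcircAll_closure]

lemma NcircAll_closure_of_mem {G : Type} [Group G] {N : Subgroup G} (hN : N.Normal) {g : G}
    (hg : g ∈ NcircAll N) : Subgroup.normalClosure {g} = N := by
  rw [mem_NcircAll_iff] at hg
  have hle : Subgroup.normalClosure {g} ≤ N :=
    Subgroup.normalClosure_le_normal (by simpa using hg.1)
  rcases lt_or_eq_of_le hle with hlt | heq
  · exact absurd (Subgroup.subset_normalClosure (Set.mem_singleton g))
      (hg.2 _ Subgroup.normalClosure_normal hlt)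
  · exact heq

theorem stmt_14 {G : Type} [Group G] [Fintype G] :
    {s : Set G | ∃ g : G, s = closureClass g} =
      {s : Set G | ∃ N : Subgroup G, N.Normal ∧ s = NcircAll N ∧ s.Nonempty} ∧
    Setoid.IsPartition {s : Set G | ∃ g : G, s = closureClass g} := by
  have hself : ∀ g : G, g ∈ closureClass g := fun g => rfl
  constructor
  · ext s
    simp only [Set.mem_setOf_eq]
    constructor
    · rintro ⟨g, rfl⟩
      exact ⟨Subgroup.normalClosure {g}, Subgroup.normalClosure_normal,
        closureClass_eq_NcircAll g, ⟨g, hself g⟩⟩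
    · rintro ⟨N, hN, rfl, ⟨g, hg⟩⟩
      refine ⟨g, ?_⟩
      rw [closureClass_eq_NcircAll, NcircAll_closure_of_mem hN hg]
  · constructor
    · rintro ⟨g, hg⟩
      exact absurd (hself g) (hg ▸ Set.notMem_empty g)
    · intro a
      refine ⟨closureClass a, ⟨⟨a, rfl⟩, hself a⟩, ?_⟩
      rintro s ⟨⟨g, rfl⟩, ha⟩
      ext h
      simp only [closureClass, Set.mem_setOf_eq]
      rw [ha]
end

section
/- Let G be a finite group. For every g ∈ G there exists a normal subgroup N of G such that K_g = N°, where K_g = ⋃{C_h : E_h = E_g}, E_g = {χ ∈ Irr(G) : χ(g) ≠ χ(1)}, and N° is taken with respect to the set of all normal subgroups of G; specifically N = ⋂{ker χ : χ ∈ Irr(G), χ(g) = χ(1)}. -/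
/-!
A normal subgroup `N` is the intersection of the kernels of the irreducible characters whose
kernel contains `N`. Two facts give this: `χ(x) = χ(1)` forces `ρ(x) = 1`, since the eigenvalues
of `ρ(x)` are roots of unity summing to `χ(1)`; and for `x ∉ N`, Maschke's theorem applied to
`ℂ[G ⧸ N]` yields an irreducible representation trivial on `N` but not at `x`. Consequently
`E_h = E_g` exactly when `h` and `g` have the same normal closure, so `K_g` is the set of elements
whose normal closure is `N = ⟨g⟩^G`, and that set is `N°`.
-/

open CategoryTheory
open scoped Classical BigOperators

lemma Complex.eq_one_of_norm_le_one_of_re_eq_one {z : ℂ} (hz : ‖z‖ ≤ 1) (hre : z.re = 1) :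
    z = 1 := by
  have him : z.im = 0 := by
    have h := Complex.sq_norm z
    rw [Complex.normSq_apply, hre] at h
    nlinarith [norm_nonneg z]
  exact Complex.ext hre him

lemma Multiset.eq_one_of_norm_le_one_of_sum_eq_card {s : Multiset ℂ}
    (hs : ∀ z ∈ s, ‖z‖ ≤ 1) (hsum : s.sum = card s) : ∀ z ∈ s, z = 1 := by
  have hre : ∀ z ∈ s, z.re ≤ 1 := fun z hz => (Complex.re_le_norm z).trans (hs z hz)
  have hdefect : (s.map fun z => 1 - z.re).sum = 0 := by
    have h := congrArg Complex.reAddGroupHom hsum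
    rw [map_multiset_sum, Complex.coe_reAddGroupHom] at h
    simp [Multiset.sum_map_sub, h]
  intro z hz
  have h := Multiset.all_zero_of_le_zero_le_of_sum_eq_zero
    (by simpa using hre) hdefect (1 - z.re) (Multiset.mem_map_of_mem _ hz)
  exact Complex.eq_one_of_norm_le_one_of_re_eq_one (hs z hz) (by linarith)

lemma Module.End.HasEigenvalue.pow_eq_one {K V : Type*} [Field K] [AddCommGroup V] [Module K V]
    {f : Module.End K V} {μ : K} (hμ : f.HasEigenvalue μ) {n : ℕ} (hf : f ^ n = 1) :
    μ ^ n = 1 := by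
  obtain ⟨v, hv⟩ := hμ.exists_hasEigenvector
  have h := hv.pow_apply n
  rw [hf, Module.End.one_apply] at h
  exact (smul_left_injective K hv.2).eq_iff.mp (by rw [← h, one_smul]) |>.symm

open Polynomial in
theorem Module.End.eq_one_of_pow_eq_one_of_trace_eq_finrank {V : Type*} [AddCommGroup V]
    [Module ℂ V] [FiniteDimensional ℂ V] {f : Module.End ℂ V} {n : ℕ} (hn : n ≠ 0)
    (hf : f ^ n = 1) (htr : LinearMap.trace ℂ V f = Module.finrank ℂ V) : f = 1 := by
  have hroots : ∀ μ ∈ f.charpoly.roots, μ = 1 := by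
    refine Multiset.eq_one_of_norm_le_one_of_sum_eq_card (fun μ hμ => ?_) ?_
    · have hμ : f.HasEigenvalue μ :=
        (f.hasEigenvalue_iff_isRoot_charpoly μ).mpr (isRoot_of_mem_roots hμ)
      exact (Complex.norm_eq_one_of_pow_eq_one (hμ.pow_eq_one hf) hn).le
    · rw [← trace_eq_sum_roots_charpoly_of_splits (IsAlgClosed.splits _), htr,
        splits_iff_card_roots.mp (IsAlgClosed.splits _), LinearMap.charpoly_natDegree]
  have hss : f.IsSemisimple := isSemisimple_of_squarefree_aeval_eq_zero
    (separable_X_pow_sub_C (1 : ℂ) (by exact_mod_cast hn) one_ne_zero).squarefree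
    (by simp [hf])
  have htop : f.eigenspace 1 = ⊤ := by
    rw [← hss.iSup_eigenspace_eq_top]
    refine le_antisymm (le_iSup _ 1) (iSup_le fun μ => ?_)
    by_cases hμ : f.HasEigenvalue μ
    · rw [hroots μ (mem_roots f.charpoly_monic.ne_zero |>.mpr
        ((f.hasEigenvalue_iff_isRoot_charpoly μ).mp hμ))]
    · rw [hasEigenvalue_iff, not_not] at hμ
      simp [hμ]
  ext v
  simpa using mem_eigenspace_iff.mp (htop ▸ Submodule.mem_top : v ∈ f.eigenspace 1)

lemma FDRep.simple_of_isIrreducible {G V : Type} [Group G] [Fintype G] [AddCommGroup V]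
    [Module ℂ V] [FiniteDimensional ℂ V] (ρ : Representation ℂ G V) [ρ.IsIrreducible] :
    Simple (FDRep.of ρ) := by
  have := invertibleOfNonzero (NeZero.ne (Nat.card G : ℂ))
  rw [FDRep.simple_iff_char_is_norm_one]
  have h := Representation.char_orthonormal ρ ρ
  rw [if_pos ⟨Representation.Equiv.refl ρ⟩, inv_mul_eq_one₀ (NeZero.ne _)] at h
  exact h.symm

lemma Representation.isIrreducible_ofModule' {G k M : Type*} [Monoid G] [Field k]
    [AddCommGroup M] [Module k M] [Module (MonoidAlgebra k G) M]
    [IsScalarTower k (MonoidAlgebra k G) M] [IsSimpleModule (MonoidAlgebra k G) M] :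
    (Representation.ofModule' (k := k) (G := G) M).IsIrreducible := by
  rw [irreducible_iff_isSimpleModule_asModule]
  refine IsSimpleModule.congr
    { (Representation.ofModule' (k := k) (G := G) M).asModuleEquiv with
      map_smul' := fun r x => ?_ }
  have hlsmul : asAlgebraHom (ofModule' (k := k) (G := G) M) = Algebra.lsmul k k M :=
    (MonoidAlgebra.lift k _ G).apply_symm_apply _
  change asModuleEquiv _ (r • x) = r • asModuleEquiv _ x
  rw [asModuleEquiv_map_smul, hlsmul]
  rfl

lemma IsSemisimpleModule.exists_isSimpleModule_smul_ne {R M : Type*} [Ring R] [AddCommGroup M]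
    [Module R M] [IsSemisimpleModule R M] {a : R} {v : M} (hv : a • v ≠ v) :
    ∃ p : Submodule R M, IsSimpleModule R p ∧ ∃ w ∈ p, a • w ≠ w := by
  by_contra! h
  have hmem : v ∈ sSup {p : Submodule R M | IsSimpleModule R p} := by
    rw [IsSemisimpleModule.sSup_simples_eq_top]; trivial
  rw [sSup_eq_iSup'] at hmem
  refine hv (Submodule.iSup_induction _ (motive := fun v => a • v = v) hmem
    (fun p w hw => h p p.2 w hw) (smul_zero a) fun w w' hw hw' => ?_)
  rw [smul_add, hw, hw']

lemma Representation.ofMulAction_quotient_eq_one {k G : Type*} [Semiring k] [Group G]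
    {N : Subgroup G} [N.Normal] {m : G} (hm : m ∈ N) : ofMulAction k G (G ⧸ N) m = 1 := by
  refine MonoidAlgebra.lhom_ext' fun q => LinearMap.ext_ring ?_
  induction q using QuotientGroup.induction_on with | H g => ?_
  rw [LinearMap.comp_apply, MonoidAlgebra.lsingle_apply, ofMulAction_single,
    MulAction.Quotient.smul_coe, smul_eq_mul, QuotientGroup.mk_mul,
    (QuotientGroup.eq_one_iff m).mpr hm, one_mul]
  rfl

/- `G` acts on `ℂ[G ⧸ N]` with `N` in the kernel and with `x` moving the trivial coset; by
Maschke's theorem some simple summand of this module still sees `x` act nontrivially. -/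
lemma FDRep.exists_simple_of_not_mem_normal {G : Type} [Group G] [Fintype G] (N : Subgroup G)
    [N.Normal] {x : G} (hx : x ∉ N) :
    ∃ V : FDRep ℂ G, Simple V ∧ N ≤ V.ρ.ker ∧ x ∉ V.ρ.ker := by
  let ρ := Representation.ofMulAction ℂ G (G ⧸ N)
  have hρx : ρ x (MonoidAlgebra.single 1 1) ≠ MonoidAlgebra.single 1 1 := by
    rw [Representation.ofMulAction_single, Ne, MonoidAlgebra.single_left_inj one_ne_zero,
      ← QuotientGroup.mk_one, MulAction.Quotient.smul_coe, smul_eq_mul, mul_one,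
      QuotientGroup.mk_one, QuotientGroup.eq_one_iff]
    exact hx
  obtain ⟨p, hp, w, hwp, hw⟩ := IsSemisimpleModule.exists_isSimpleModule_smul_ne
    (a := MonoidAlgebra.single x (1 : ℂ)) (v := ρ.asModuleEquiv.symm (MonoidAlgebra.single 1 1))
    (by rw [Representation.single_smul, one_smul]; exact hρx)
  have : FiniteDimensional ℂ p :=
    FiniteDimensional.of_injective ((p.subtype).restrictScalars ℂ) Subtype.coe_injective
  let σ := Representation.ofModule' (k := ℂ) (G := G) p
  have := Representation.isIrreducible_ofModule' (k := ℂ) (G := G) (M := p)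
  have hσ : ∀ g (v : p), (σ g v : ρ.asModule) = ρ g (ρ.asModuleEquiv v) := fun g v => by
    rw [← one_smul ℂ (ρ g _), ← Representation.single_smul]
    rfl
  refine ⟨FDRep.of (R := ℂ) (V := p) σ, FDRep.simple_of_isIrreducible (V := p) σ,
    fun m hm => ?_, fun hxσ => hw ?_⟩
  · rw [MonoidHom.mem_ker, FDRep.of_ρ']
    ext v
    rw [hσ, Representation.ofMulAction_quotient_eq_one hm]
    rfl
  · rw [MonoidHom.mem_ker, FDRep.of_ρ'] at hxσ
    rw [Representation.single_smul, one_smul, ← hσ x ⟨w, hwp⟩, hxσ]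
    rfl

theorem FDRep.character_eq_character_one_iff {G : Type*} [Group G] [Finite G] (V : FDRep ℂ G)
    (x : G) : V.character x = V.character 1 ↔ V.ρ x = 1 := by
  refine ⟨fun h => Module.End.eq_one_of_pow_eq_one_of_trace_eq_finrank (orderOf_pos x).ne'
    (by rw [← map_pow, pow_orderOf_eq_one, map_one]) (h.trans (FDRep.char_one V)),
    fun h => by rw [FDRep.character, FDRep.character, h, V.ρ.map_one]⟩

lemma charKer_character {G : Type} [Group G] [Finite G] (V : FDRep ℂ G) :
    charKer V.character = V.ρ.ker :=
  Set.ext fun x => V.character_eq_character_one_iff x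

lemma Subgroup.normalClosure_singleton_le_iff {G : Type*} [Group G] {N : Subgroup G} [N.Normal]
    {x : G} : normalClosure {x} ≤ N ↔ x ∈ N :=
  ⟨fun h => h (subset_normalClosure rfl), fun h => normalClosure_le_normal (by simpa using h)⟩

lemma IsConj.normalClosure_singleton_eq {G : Type*} [Group G] {x y : G} (h : IsConj x y) :
    Subgroup.normalClosure {x} = Subgroup.normalClosure {y} := by
  obtain ⟨c, rfl⟩ := isConj_iff.mp h
  refine le_antisymm (Subgroup.normalClosure_singleton_le_iff.mpr ?_)
    (Subgroup.normalClosure_singleton_le_iff.mpr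
      (Subgroup.normalClosure_normal.conj_mem x
        (Subgroup.subset_normalClosure (Set.mem_singleton x)) c))
  simpa [mul_assoc] using Subgroup.normalClosure_normal.conj_mem _
    (Subgroup.subset_normalClosure (Set.mem_singleton (c * x * c⁻¹))) c⁻¹

section Characters

variable {G : Type} [Group G] [Fintype G]

lemma normalClosure_subset_charKer_iff {χ : G → ℂ} (hχ : χ ∈ Irr G) (g : G) :
    (Subgroup.normalClosure {g} : Set G) ⊆ charKer χ ↔ χ g = χ 1 := by
  obtain ⟨V, -, rfl⟩ := hχ
  rw [charKer_character, SetLike.coe_subset_coe, Subgroup.normalClosure_singleton_le_iff]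
  exact (V.character_eq_character_one_iff g).symm

lemma XN_normalClosure (g : G) :
    XN (Subgroup.normalClosure {g}) = {χ | χ ∈ Irr G ∧ χ g = χ 1} := by
  ext χ
  exact and_congr_right fun hχ => normalClosure_subset_charKer_iff hχ g

lemma exists_mem_XN_not_mem_charKer (N : Subgroup G) [N.Normal] {x : G} (hx : x ∉ N) :
    ∃ χ ∈ XN N, x ∉ charKer χ := by
  obtain ⟨V, hV, hN, hxV⟩ := FDRep.exists_simple_of_not_mem_normal N hx
  refine ⟨V.character, ⟨⟨V, hV, rfl⟩, ?_⟩, ?_⟩ <;> rw [charKer_character]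
  · exact hN
  · exact hxV

lemma biInter_XN_charKer (N : Subgroup G) [N.Normal] :
    ⋂ χ ∈ XN N, charKer χ = N := by
  refine subset_antisymm (fun x hx => ?_) (Set.subset_iInter₂ fun χ hχ => hχ.2)
  by_contra hxN
  obtain ⟨χ, hχ, hxχ⟩ := exists_mem_XN_not_mem_charKer N hxN
  exact hxχ (Set.mem_iInter₂.mp hx χ hχ)

lemma Eg_eq_Irr_sdiff_XN (g : G) : Eg g = Irr G \ XN (Subgroup.normalClosure {g}) := by
  ext χ
  rw [XN_normalClosure]
  exact ⟨fun ⟨hχ, hne⟩ => ⟨hχ, fun h => hne h.2⟩,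
    fun ⟨hχ, hn⟩ => ⟨hχ, fun h => hn ⟨hχ, h⟩⟩⟩

lemma XN_inj {N K : Subgroup G} [N.Normal] [K.Normal] : XN N = XN K ↔ N = K :=
  ⟨fun h => SetLike.coe_injective (by rw [← biInter_XN_charKer, h, biInter_XN_charKer]),
    congrArg XN⟩

lemma Eg_eq_Eg_iff (h g : G) :
    Eg h = Eg g ↔ Subgroup.normalClosure {h} = Subgroup.normalClosure {g} := by
  rw [Eg_eq_Irr_sdiff_XN, Eg_eq_Irr_sdiff_XN,
    sdiff_right_inj (fun _ hχ => hχ.1) (fun _ hχ => hχ.1), XN_inj]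

lemma Kg_eq_closureClass (g : G) : Kg g = closureClass g := by
  ext x
  constructor
  · rintro ⟨h, hhg, hhx⟩
    exact hhx.normalClosure_singleton_eq.symm.trans ((Eg_eq_Eg_iff h g).mp hhg)
  · intro hx
    exact ⟨x, (Eg_eq_Eg_iff x g).mpr hx, IsConj.refl x⟩

end Characters

theorem stmt_18 {G : Type} [Group G] [Fintype G] (g : G) :
    ∃ N : Subgroup G, N.Normal ∧ Kg g = NcircAll N ∧
      (N : Set G) = ⋂ χ ∈ {χ | χ ∈ Irr G ∧ χ g = χ 1}, charKer χ := by
  refine ⟨Subgroup.normalClosure {g}, Subgroup.normalClosure_normal,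
    (Kg_eq_closureClass g).trans (closureClass_eq_NcircAll g), ?_⟩
  rw [← XN_normalClosure, biInter_XN_charKer]
end
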